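/- arXiv:1812.09038 — 4 statements merged into one kernel-verified Lean document; each statement's English description precedes it below -/
import Mathlib

section
/- Let M = M_1 ∪ M_2 ∪ M_3 be a maximum uniquely restricted matching in G(Γ) with M_1 contained in the edge sets of the X_i's, M_2 contained in the edge sets of the C_j's, and M_3 contained in the set of edges between ∪_i X_i and its complement, chosen minimizing |M_3|. If j ∈ [m] is such that M_3 contains an edge incident with C_j, then M_2 contains no edge of the star on C_j. -/
open SimpleGraph

/-- The subgraph of `G` consisting of those pairs in `s` that are actually edges of `G`. -/
def pairsSubgraph {V : Type*} (G : SimpleGraph V) (s : Set (V × V)) : G.Subgraph where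
  verts := {v | ∃ a b, (G.Adj a b ∧ ((a, b) ∈ s ∨ (b, a) ∈ s)) ∧ (v = a ∨ v = b)}
  Adj a b := G.Adj a b ∧ ((a, b) ∈ s ∨ (b, a) ∈ s)
  adj_sub h := h.1
  edge_vert h := ⟨_, _, h, Or.inl rfl⟩
  symm := ⟨fun _ _ h => ⟨h.1.symm, h.2.symm⟩⟩

/-- `M` is an induced matching in `G`: it is a matching, and `G(M)`, the subgraph of `G`
induced by the set `V(M)` of covered vertices (which is `M.verts` for a matching subgraph),
is `1`-regular, i.e. every vertex of `G(M)` has exactly one neighbour in `G(M)`. -/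
def IsInducedMatching {V : Type*} (G : SimpleGraph V) (M : G.Subgraph) : Prop :=
  M.IsMatching ∧ ∀ v : M.verts, ∃! w : M.verts, (G.induce M.verts).Adj v w

/-- `M` is an acyclic matching in `G`: it is a matching and `G(M)` is a forest. -/
def IsAcyclicMatching {V : Type*} (G : SimpleGraph V) (M : G.Subgraph) : Prop :=
  M.IsMatching ∧ (G.induce M.verts).IsAcyclic

/-- `M` is a uniquely restricted matching in `G`: it is a matching and it is the unique
perfect matching of `G(M)`, i.e. the unique matching of `G` covering exactly `M.verts`. -/
def IsURMatching {V : Type*} (G : SimpleGraph V) (M : G.Subgraph) : Prop :=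
  M.IsMatching ∧ ∀ M' : G.Subgraph, M'.IsMatching → M'.verts = M.verts → M' = M

/-- The (ordinary) matching number `ν(G)`: the maximum cardinality of a matching in `G`. -/
noncomputable def nuMatch {V : Type*} (G : SimpleGraph V) : ℕ :=
  sSup {k : ℕ | ∃ M : G.Subgraph, M.IsMatching ∧ M.edgeSet.ncard = k}

/-- The uniquely restricted matching number `ν_ur(G)`. -/
noncomputable def nuUR {V : Type*} (G : SimpleGraph V) : ℕ :=
  sSup {k : ℕ | ∃ M : G.Subgraph, IsURMatching G M ∧ M.edgeSet.ncard = k}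

/-- The acyclic matching number `ν_ac(G)`. -/
noncomputable def nuAc {V : Type*} (G : SimpleGraph V) : ℕ :=
  sSup {k : ℕ | ∃ M : G.Subgraph, IsAcyclicMatching G M ∧ M.edgeSet.ncard = k}

/-- The induced (strong) matching number `ν_s(G)`. -/
noncomputable def nuS {V : Type*} (G : SimpleGraph V) : ℕ :=
  sSup {k : ℕ | ∃ M : G.Subgraph, IsInducedMatching G M ∧ M.edgeSet.ncard = k}

/-- `cyc` is an `M`-alternating cycle in `G`: a cycle of `G` whose edges alternate between
edges of `M` and edges of `E(G) \ M`. -/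
def IsAltCycle {V : Type*} (G : SimpleGraph V) (M : G.Subgraph) {v : V}
    (cyc : G.Walk v v) : Prop :=
  cyc.IsCycle ∧ cyc.toSubgraph.spanningCoe.IsAlternating M.spanningCoe

/-- Vertices of the graph `G(Γ)` for the EXACT SATISFIABILITY instance `Γ` with `n` variables and
`m` clauses (all literals positive): `Sum.inl (i, 0) = t_i`, `Sum.inl (i, 1) = f_i`,
`Sum.inl (i, 2) = u_i` are the vertices of the star `X_i ≅ K_{1,2}` with centre `u_i`;
`Sum.inr (j, none) = v_j` is the centre of the star `C_j ≅ K_{1,3}` and `Sum.inr (j, some i)` is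
the leaf of `C_j` identified with the literal `x_i` (it is isolated unless `x_i ∈ c_j`). -/
abbrev XSatV (n m : ℕ) : Type := (Fin n × Fin 3) ⊕ (Fin m × Option (Fin n))

/-- The base relation for `G(Γ)`: the star edges `u_i f_i`, `u_i t_i` and `v_j w` for each leaf
`w` of `C_j`; an edge from `f_i` to every vertex of `W` (the leaves identified with the literal
`x_i`), and an edge from `t_i` to every vertex of `W'` (the leaves of those stars `C_j` that meet
`W`, which are not in `W`). -/
def xsatRel {n m : ℕ} (c : Fin m → Finset (Fin n)) : XSatV n m → XSatV n m → Prop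
  | Sum.inl (i, k), Sum.inl (i', k') => i = i' ∧ k = 2 ∧ k' ≠ 2
  | Sum.inr (j, o), Sum.inr (j', o') => j = j' ∧ o = none ∧ ∃ i, o' = some i ∧ i ∈ c j
  | Sum.inl (i, k), Sum.inr (j, o) =>
      (k = 1 ∧ o = some i ∧ i ∈ c j) ∨
      (k = 0 ∧ ∃ i', o = some i' ∧ i' ∈ c j ∧ i ∈ c j ∧ i' ≠ i)
  | Sum.inr _, Sum.inl _ => False

/-- The graph `G(Γ)` built from the EXACT SATISFIABILITY instance `Γ` whose clauses are given
by `c`. -/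
def xsatGraph {n m : ℕ} (c : Fin m → Finset (Fin n)) : SimpleGraph (XSatV n m) :=
  SimpleGraph.fromRel (xsatRel c)

/-- The number of edges of a subgraph `M` joining the left part and the right part of the vertex
set; this counts the edges of `M₃` in the decomposition `M = M₁ ∪ M₂ ∪ M₃`. -/
noncomputable def crossCount {α β : Type*} {G : SimpleGraph (α ⊕ β)} (M : G.Subgraph) : ℕ :=
  {p : α × β | M.Adj (Sum.inl p.1) (Sum.inr p.2)}.ncard

/-!
Suppose `M` has a cross edge `xy` with `y` a leaf of `C_j` and `x ∈ {f_a, t_a}`, and a star edge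
`v_j z`. If `z` is adjacent to `x`, or `u_a` is covered by `M`, these edges close an
`M`-alternating 4- or 6-cycle in `G(M)`, so `M` is not uniquely restricted. Otherwise `u_a` is
uncovered and replacing `xy` by `x u_a` gives a matching `M'` of the same size with one cross
edge fewer. `M'` is again uniquely restricted: a perfect matching of `G(M')` that matches `u_a`
to the other leaf of `X_a` starts an alternating path from `u_a` to `y`, and switching along it
gives a perfect matching of `G(M)` other than `M`. This contradicts the minimality of `|M₃|`.
-/

namespace SimpleGraph.Subgraph

variable {V : Type*} {G : SimpleGraph V} {M N D P : G.Subgraph} {a b c d e f g u v w x y : V}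

theorem IsMatching.sup_subgraphOfAdj (hM : M.IsMatching) (h : G.Adj v w) (hv : v ∉ M.verts)
    (hw : w ∉ M.verts) : (M ⊔ G.subgraphOfAdj h).IsMatching :=
  hM.sup (.subgraphOfAdj h) <| by
    rw [hM.support_eq_verts, (IsMatching.subgraphOfAdj h).support_eq_verts,
      subgraphOfAdj_verts, Set.disjoint_insert_right, Set.disjoint_singleton_right]
    exact ⟨hv, hw⟩

theorem IsMatching.deleteVerts_sup (hN : N.IsMatching) (hD : D.IsMatching) (hDN : D ≤ N)
    (hP : P.IsMatching) (hdisj : Disjoint (N.verts \ D.verts) P.verts) :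
    (N.deleteVerts D.verts ⊔ P).IsMatching := by
  have hrest : (N.deleteVerts D.verts).IsMatching := by
    rintro v ⟨hvN, hvD⟩
    obtain ⟨w, hvw, huniq⟩ := hN hvN
    have hwD : w ∉ D.verts := fun hwD => by
      obtain ⟨w', hww', -⟩ := hD hwD
      exact hvD (hN.eq_of_adj_left hvw.symm (hDN.2 hww') ▸ D.edge_vert hww'.symm)
    exact ⟨w, deleteVerts_adj.2 ⟨hvN, hvD, N.edge_vert hvw.symm, hwD, hvw⟩,
      fun w' hw' => huniq w' (deleteVerts_adj.1 hw').2.2.2.2⟩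
  refine hrest.sup hP ?_
  rwa [hrest.support_eq_verts, hP.support_eq_verts]

theorem IsMatching.eq_of_verts_eq_of_adj (hM : M.IsMatching) (hN : N.IsMatching)
    (hV : M.verts = N.verts) (hadj : ∀ ⦃v w⦄, M.Adj v w → N.Adj v w) : M = N := by
  refine Subgraph.ext hV (funext₂ fun v w => propext ⟨fun h => hadj h, fun h => ?_⟩)
  obtain ⟨w', hvw', -⟩ := hM (hV ▸ N.edge_vert h)
  exact hN.eq_of_adj_left (hadj hvw') h ▸ hvw'

/- With `e = a` the four edges form an alternating cycle, with `e ∉ N.verts` an alternating path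
from `a` to a vertex outside `N`; likewise for `exists_exchange₆`. -/
theorem IsMatching.exists_exchange₄ (hN : N.IsMatching) (hab : N.Adj a b) (hcd : N.Adj c d)
    (hbc : G.Adj b c) (hde : G.Adj d e) (hnd : [a, b, c, d].Nodup) (he : e = a ∨ e ∉ N.verts) :
    ∃ Q : G.Subgraph, Q.IsMatching ∧ Q.verts = insert e (N.verts \ {a}) ∧ Q.Adj d e := by
  have hb := N.edge_vert hab.symm
  have hc := N.edge_vert hcd
  have hd := N.edge_vert hcd.symm
  have heb : e ≠ b := by rintro rfl; simp_all
  have hec : e ≠ c := by rintro rfl; simp_all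
  have hed : e ≠ d := by rintro rfl; exact hde.ne rfl
  simp only [List.nodup_cons, List.mem_cons, List.not_mem_nil, List.nodup_nil, or_false, not_or,
    not_false_eq_true, and_true] at hnd
  refine ⟨N.deleteVerts (G.subgraphOfAdj hab.adj_sub ⊔ G.subgraphOfAdj hcd.adj_sub).verts ⊔
    (G.subgraphOfAdj hbc ⊔ G.subgraphOfAdj hde), hN.deleteVerts_sup ?_ ?_ ?_ ?_, ?_, ?_⟩
  · exact (IsMatching.subgraphOfAdj _).sup_subgraphOfAdj _
      (by grind [subgraphOfAdj_verts]) (by grind [subgraphOfAdj_verts])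
  · exact sup_le (subgraphOfAdj_le_of_adj N hab) (subgraphOfAdj_le_of_adj N hcd)
  · exact (IsMatching.subgraphOfAdj _).sup_subgraphOfAdj _
      (by grind [subgraphOfAdj_verts]) (by grind [subgraphOfAdj_verts])
  · simp only [verts_sup, subgraphOfAdj_verts, Set.disjoint_left]
    grind
  · ext x
    simp only [verts_sup, deleteVerts_verts, subgraphOfAdj_verts]
    grind
  · simp

theorem IsMatching.exists_exchange₆ (hN : N.IsMatching) (hab : N.Adj a b) (hcd : N.Adj c d)
    (hef : N.Adj e f) (hbc : G.Adj b c) (hde : G.Adj d e) (hfg : G.Adj f g)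
    (hnd : [a, b, c, d, e, f].Nodup) (hg : g = a ∨ g ∉ N.verts) :
    ∃ Q : G.Subgraph, Q.IsMatching ∧ Q.verts = insert g (N.verts \ {a}) ∧ Q.Adj f g := by
  have hb := N.edge_vert hab.symm
  have hc := N.edge_vert hcd
  have hd := N.edge_vert hcd.symm
  have he := N.edge_vert hef
  have hf := N.edge_vert hef.symm
  have hgb : g ≠ b := by rintro rfl; simp_all
  have hgc : g ≠ c := by rintro rfl; simp_all
  have hgd : g ≠ d := by rintro rfl; simp_all
  have hge : g ≠ e := by rintro rfl; simp_all
  have hgf : g ≠ f := by rintro rfl; exact hfg.ne rfl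
  simp only [List.nodup_cons, List.mem_cons, List.not_mem_nil, List.nodup_nil, or_false, not_or,
    not_false_eq_true, and_true] at hnd
  refine ⟨N.deleteVerts (G.subgraphOfAdj hab.adj_sub ⊔ G.subgraphOfAdj hcd.adj_sub ⊔
      G.subgraphOfAdj hef.adj_sub).verts ⊔
    (G.subgraphOfAdj hbc ⊔ G.subgraphOfAdj hde ⊔ G.subgraphOfAdj hfg),
    hN.deleteVerts_sup ?_ ?_ ?_ ?_, ?_, ?_⟩
  · exact ((IsMatching.subgraphOfAdj _).sup_subgraphOfAdj _
      (by grind [subgraphOfAdj_verts]) (by grind [subgraphOfAdj_verts])).sup_subgraphOfAdj _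
      (by grind [subgraphOfAdj_verts, verts_sup]) (by grind [subgraphOfAdj_verts, verts_sup])
  · exact sup_le (sup_le (subgraphOfAdj_le_of_adj N hab) (subgraphOfAdj_le_of_adj N hcd))
      (subgraphOfAdj_le_of_adj N hef)
  · exact ((IsMatching.subgraphOfAdj _).sup_subgraphOfAdj _
      (by grind [subgraphOfAdj_verts]) (by grind [subgraphOfAdj_verts])).sup_subgraphOfAdj _
      (by grind [subgraphOfAdj_verts, verts_sup]) (by grind [subgraphOfAdj_verts, verts_sup])
  · simp only [verts_sup, subgraphOfAdj_verts, Set.disjoint_left]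
    grind
  · ext x
    simp only [verts_sup, deleteVerts_verts, subgraphOfAdj_verts]
    grind
  · simp

def replaceEdge (M : G.Subgraph) (y : V) (hxu : G.Adj x u) : G.Subgraph :=
  M.deleteVerts {x, y} ⊔ G.subgraphOfAdj hxu

theorem IsMatching.replaceEdge (hM : M.IsMatching) (hxy : M.Adj x y) (hxu : G.Adj x u)
    (hu : u ∉ M.verts) : (M.replaceEdge y hxu).IsMatching :=
  hM.deleteVerts_sup (D := G.subgraphOfAdj hxy.adj_sub) (.subgraphOfAdj _)
    (subgraphOfAdj_le_of_adj M hxy) (.subgraphOfAdj _) <| by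
      simp only [subgraphOfAdj_verts, Set.disjoint_left]
      grind

theorem replaceEdge_adj {hxu : G.Adj x u} :
    (M.replaceEdge y hxu).Adj v w ↔
      (M.Adj v w ∧ v ∉ ({x, y} : Set V) ∧ w ∉ ({x, y} : Set V)) ∨ s(x, u) = s(v, w) := by
  simp only [replaceEdge, sup_adj, deleteVerts_adj, subgraphOfAdj_adj]
  grind [Subgraph.edge_vert, Subgraph.Adj.symm]

theorem verts_replaceEdge (hxy : M.Adj x y) (hxu : G.Adj x u) :
    (M.replaceEdge y hxu).verts = insert u (M.verts \ {y}) := by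
  have := M.edge_vert hxy
  have := hxy.ne
  ext v
  simp only [replaceEdge, verts_sup, deleteVerts_verts, subgraphOfAdj_verts]
  grind

theorem edgeSet_replaceEdge (hM : M.IsMatching) (hxy : M.Adj x y) (hxu : G.Adj x u) :
    (M.replaceEdge y hxu).edgeSet = insert s(x, u) (M.edgeSet \ {s(x, y)}) := by
  ext e
  refine Sym2.ind (fun p q => ?_) e
  simp only [Subgraph.mem_edgeSet, replaceEdge_adj, Set.mem_insert_iff, Set.mem_sdiff,
    Set.mem_singleton_iff, Sym2.eq_iff]
  have hx : ∀ w, M.Adj x w → w = y := fun w h => hM.eq_of_adj_left h hxy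
  have hy : ∀ w, M.Adj y w → w = x := fun w h => hM.eq_of_adj_left h hxy.symm
  grind [Subgraph.Adj.symm]

theorem ncard_edgeSet_replaceEdge [Finite V] (hM : M.IsMatching) (hxy : M.Adj x y)
    (hxu : G.Adj x u) (hu : u ∉ M.verts) :
    (M.replaceEdge y hxu).edgeSet.ncard = M.edgeSet.ncard := by
  rw [edgeSet_replaceEdge hM hxy hxu, Set.ncard_insert_of_notMem,
    Set.ncard_sdiff_singleton_add_one]
  · exact hxy
  · exact fun h => hu (M.edge_vert (h.1 : M.Adj x u).symm)

end SimpleGraph.Subgraph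

theorem Set.insert_sdiff_insert_sdiff_cancel {α : Type*} {s : Set α} {y u : α} (hy : y ∈ s)
    (hu : u ∉ s) : insert y (insert u (s \ {y}) \ {u}) = s := by
  ext v
  simp only [Set.mem_insert_iff, Set.mem_sdiff, Set.mem_singleton_iff]
  grind

namespace IsURMatching

variable {V : Type*} {G : SimpleGraph V} {M N : G.Subgraph} {a b c d e f g u x y : V}

theorem false_of_alternating_cycle₄ (hM : IsURMatching G M) (hab : M.Adj a b) (hcd : M.Adj c d)
    (hbc : G.Adj b c) (hda : G.Adj d a) (hnd : [a, b, c, d].Nodup) : False := by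
  obtain ⟨Q, hQ, hQV, hQda⟩ := hM.1.exists_exchange₄ hab hcd hbc hda hnd (.inl rfl)
  rw [Set.insert_sdiff_singleton, Set.insert_eq_of_mem (M.edge_vert hab)] at hQV
  rw [hM.2 Q hQ hQV] at hQda
  exact (List.nodup_cons.1 hnd).1 (by simp [hM.1.eq_of_adj_left hQda hcd.symm])

theorem false_of_alternating_cycle₆ (hM : IsURMatching G M) (hab : M.Adj a b) (hcd : M.Adj c d)
    (hef : M.Adj e f) (hbc : G.Adj b c) (hde : G.Adj d e) (hfa : G.Adj f a)
    (hnd : [a, b, c, d, e, f].Nodup) : False := by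
  obtain ⟨Q, hQ, hQV, hQfa⟩ := hM.1.exists_exchange₆ hab hcd hef hbc hde hfa hnd (.inl rfl)
  rw [Set.insert_sdiff_singleton, Set.insert_eq_of_mem (M.edge_vert hab)] at hQV
  rw [hM.2 Q hQ hQV] at hQfa
  exact (List.nodup_cons.1 hnd).1 (by simp [hM.1.eq_of_adj_left hQfa hef.symm])

theorem adj_of_alternating_path₄ (hM : IsURMatching G M) (hN : N.IsMatching)
    (hV : insert e (N.verts \ {a}) = M.verts) (hab : N.Adj a b) (hcd : N.Adj c d)
    (hbc : G.Adj b c) (hde : G.Adj d e) (hnd : [a, b, c, d].Nodup) (he : e ∉ N.verts) :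
    M.Adj d e := by
  obtain ⟨Q, hQ, hQV, hQde⟩ := hN.exists_exchange₄ hab hcd hbc hde hnd (.inr he)
  exact hM.2 Q hQ (hQV.trans hV) ▸ hQde

theorem adj_of_alternating_path₆ (hM : IsURMatching G M) (hN : N.IsMatching)
    (hV : insert g (N.verts \ {a}) = M.verts) (hab : N.Adj a b) (hcd : N.Adj c d)
    (hef : N.Adj e f) (hbc : G.Adj b c) (hde : G.Adj d e) (hfg : G.Adj f g)
    (hnd : [a, b, c, d, e, f].Nodup) (hg : g ∉ N.verts) : M.Adj f g := by
  obtain ⟨Q, hQ, hQV, hQfg⟩ := hN.exists_exchange₆ hab hcd hef hbc hde hfg hnd (.inr hg)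
  exact hM.2 Q hQ (hQV.trans hV) ▸ hQfg

theorem replaceEdge (hM : IsURMatching G M) (hxy : M.Adj x y) (hxu : G.Adj x u)
    (hu : u ∉ M.verts)
    (hforced : ∀ N : G.Subgraph, N.IsMatching → N.verts = insert u (M.verts \ {y}) →
      N.Adj x u) :
    IsURMatching G (M.replaceEdge y hxu) := by
  refine ⟨hM.1.replaceEdge hxy hxu hu, fun N hN hNV => ?_⟩
  rw [Subgraph.verts_replaceEdge hxy hxu] at hNV
  have hNxu := hforced N hN hNV
  have hyM := M.edge_vert hxy.symm
  have hy : y ∉ N.verts := by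
    rw [hNV]
    rintro (rfl | ⟨-, hyy⟩)
    exacts [hu hyM, hyy rfl]
  have hMN : N.replaceEdge u hxy.adj_sub = M :=
    hM.2 _ (hN.replaceEdge hNxu hxy.adj_sub hy)
      (by rw [Subgraph.verts_replaceEdge hNxu, hNV, Set.insert_sdiff_insert_sdiff_cancel hyM hu])
  refine ((hM.1.replaceEdge hxy hxu hu).eq_of_verts_eq_of_adj hN ?_ fun p q hpq => ?_).symm
  · rw [Subgraph.verts_replaceEdge hxy hxu, hNV]
  · rw [← hMN, Subgraph.replaceEdge_adj, Subgraph.replaceEdge_adj] at hpq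
    grind [Subgraph.Adj.symm]

end IsURMatching

theorem crossCount_replaceEdge_lt {α β : Type*} [Finite α] [Finite β]
    {G : SimpleGraph (α ⊕ β)} {M : G.Subgraph} {x u : α} {y : β}
    (hxy : M.Adj (.inl x) (.inr y)) (hxu : G.Adj (.inl x) (.inl u)) :
    crossCount (M.replaceEdge (.inr y) hxu) < crossCount M := by
  refine Set.ncard_lt_ncard ⟨fun p hp => ?_, fun h => ?_⟩
  · simp only [Set.mem_ofPred_eq, Subgraph.replaceEdge_adj, Sym2.eq_iff] at hp
    grind
  · have hxy' := @h (x, y) hxy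
    simp only [Set.mem_ofPred_eq, Subgraph.replaceEdge_adj] at hxy'
    grind

theorem not_crossCount_minimal_of_replaceEdge {α β : Type*} [Finite α] [Finite β]
    {G : SimpleGraph (α ⊕ β)} {M : G.Subgraph} (hM : IsURMatching G M)
    (hmax : M.edgeSet.ncard = nuUR G)
    (hmin : ∀ M' : G.Subgraph, IsURMatching G M' → M'.edgeSet.ncard = nuUR G →
      crossCount M ≤ crossCount M')
    {x u : α} {y : β} (hxy : M.Adj (.inl x) (.inr y)) (hxu : G.Adj (.inl x) (.inl u))
    (hu : .inl u ∉ M.verts)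
    (hforced : ∀ N : G.Subgraph, N.IsMatching →
      N.verts = insert (.inl u) (M.verts \ {.inr y}) → N.Adj (.inl x) (.inl u)) : False :=
  (crossCount_replaceEdge_lt hxy hxu).not_ge <| hmin _ (hM.replaceEdge hxy hxu hu hforced)
    ((Subgraph.ncard_edgeSet_replaceEdge hM.1 hxy hxu hu).trans hmax)
section XSat

open Sum

variable {n m : ℕ} {c : Fin m → Finset (Fin n)} {i a b w : Fin n} {j : Fin m} {k : Fin 3}

theorem xsatGraph_adj_u (hk : k ≠ 2) : (xsatGraph c).Adj (inl (i, 2)) (inl (i, k)) := by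
  simp [xsatGraph, xsatRel, hk, Ne.symm hk]

theorem xsatGraph_adj_v (hw : w ∈ c j) : (xsatGraph c).Adj (inr (j, none)) (inr (j, some w)) := by
  simp [xsatGraph, xsatRel, hw]

theorem xsatGraph_adj_f (hi : i ∈ c j) : (xsatGraph c).Adj (inl (i, 1)) (inr (j, some i)) := by
  simp [xsatGraph, xsatRel, hi]

theorem xsatGraph_adj_t (hw : w ∈ c j) (hi : i ∈ c j) (hne : w ≠ i) :
    (xsatGraph c).Adj (inl (i, 0)) (inr (j, some w)) := by
  simp [xsatGraph, xsatRel, hw, hi, hne]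

theorem eq_of_xsatGraph_adj_u {x : XSatV n m} (h : (xsatGraph c).Adj (inl (i, 2)) x) :
    x = inl (i, 0) ∨ x = inl (i, 1) := by
  rcases x with ⟨i', k'⟩ | ⟨j', o'⟩ <;>
    simp only [xsatGraph, fromRel_adj, xsatRel] at h ⊢ <;> grind

theorem exists_eq_of_xsatGraph_adj_v {x : XSatV n m} (h : (xsatGraph c).Adj (inr (j, none)) x) :
    ∃ w ∈ c j, x = inr (j, some w) := by
  rcases x with ⟨i', k'⟩ | ⟨j', o'⟩ <;>
    simp only [xsatGraph, fromRel_adj, xsatRel] at h ⊢ <;> grind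

theorem xsatGraph_adj_leaf {x : XSatV n m} (h : (xsatGraph c).Adj (inr (j, some a)) x) :
    a ∈ c j ∧
      (x = inr (j, none) ∨ x = inl (a, 1) ∨ ∃ i ∈ c j, i ≠ a ∧ x = inl (i, 0)) := by
  rcases x with ⟨i', k'⟩ | ⟨j', o'⟩ <;>
    simp only [xsatGraph, fromRel_adj, xsatRel] at h ⊢ <;> grind

theorem xsatGraph_adj_star {o o' : Option (Fin n)}
    (h : (xsatGraph c).Adj (inr (j, o)) (inr (j, o'))) :
    ∃ i ∈ c j, o = none ∧ o' = some i ∨ o = some i ∧ o' = none := by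
  simp only [xsatGraph, fromRel_adj, xsatRel] at h
  grind

variable {M N : (xsatGraph c).Subgraph}

theorem adj_f_u_of_verts_eq (hur : IsURMatching (xsatGraph c) M) (ha : a ∈ c j) (hia : i ≠ a)
    (hy : M.Adj (inl (a, 1)) (inr (j, some a))) (hz : M.Adj (inr (j, none)) (inr (j, some i)))
    (hu : inl (a, 2) ∉ M.verts) (hN : N.IsMatching)
    (hNV : N.verts = insert (inl (a, 2)) (M.verts \ {inr (j, some a)})) :
    N.Adj (inl (a, 1)) (inl (a, 2)) := by
  have hV := hNV ▸ Set.insert_sdiff_insert_sdiff_cancel (M.edge_vert hy.symm) hu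
  have hyN : inr (j, some a) ∉ N.verts := by simp [hNV]
  obtain ⟨x, hux, -⟩ := hN (hNV ▸ Set.mem_insert _ _ : inl (a, 2) ∈ N.verts)
  rcases eq_of_xsatGraph_adj_u hux.adj_sub with rfl | rfl
  · obtain ⟨x, hvx, -⟩ := hN (by simp [hNV, M.edge_vert hz] : inr (j, none) ∈ N.verts)
    obtain ⟨w, hw, rfl⟩ := exists_eq_of_xsatGraph_adj_v hvx.adj_sub
    have hwa : w ≠ a := by rintro rfl; exact hyN (N.edge_vert hvx.symm)
    have hvy := hur.adj_of_alternating_path₄ hN hV hux hvx.symm (xsatGraph_adj_t hw ha hwa)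
      (xsatGraph_adj_v ha) (by simp) hyN
    exact absurd (hur.1.eq_of_adj_left hz hvy) (by simpa using hia)
  · exact hux.symm

theorem adj_t_u_of_verts_eq (hur : IsURMatching (xsatGraph c) M) (ha : a ∈ c j) (hb : b ∈ c j)
    (hba : b ≠ a) (hy : M.Adj (inl (a, 0)) (inr (j, some b)))
    (hz : M.Adj (inr (j, none)) (inr (j, some a))) (hu : inl (a, 2) ∉ M.verts)
    (hN : N.IsMatching) (hNV : N.verts = insert (inl (a, 2)) (M.verts \ {inr (j, some b)})) :
    N.Adj (inl (a, 0)) (inl (a, 2)) := by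
  have hV := hNV ▸ Set.insert_sdiff_insert_sdiff_cancel (M.edge_vert hy.symm) hu
  have hyN : inr (j, some b) ∉ N.verts := by simp [hNV]
  obtain ⟨x, hux, -⟩ := hN (hNV ▸ Set.mem_insert _ _ : inl (a, 2) ∈ N.verts)
  rcases eq_of_xsatGraph_adj_u hux.adj_sub with rfl | rfl
  · exact hux.symm
  exfalso
  -- the partner of the leaf `(j, a)` in `N` continues an alternating path from `u_a` to `y`
  have hnvy : ¬M.Adj (inr (j, none)) (inr (j, some b)) := fun h =>
    hba (by simpa using hur.1.eq_of_adj_left h hz)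
  obtain ⟨x, hzx, -⟩ := hN (by simp [hNV, M.edge_vert hz.symm, hba.symm] :
    inr (j, some a) ∈ N.verts)
  rcases (xsatGraph_adj_leaf hzx.adj_sub).2 with rfl | rfl | ⟨i, hi, hia, rfl⟩
  · exact hnvy <| hur.adj_of_alternating_path₄ hN hV hux hzx (xsatGraph_adj_f ha)
      (xsatGraph_adj_v hb) (by simp) hyN
  · exact absurd (hN.eq_of_adj_right hux hzx) (by simp)
  by_cases hib : i = b
  · subst hib
    obtain ⟨x, hvx, -⟩ := hN (by simp [hNV, M.edge_vert hz] : inr (j, none) ∈ N.verts)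
    obtain ⟨w, hw, rfl⟩ := exists_eq_of_xsatGraph_adj_v hvx.adj_sub
    have hwi : w ≠ i := by rintro rfl; exact hyN (N.edge_vert hvx.symm)
    have hwa : w ≠ a := by rintro rfl; exact absurd (hN.eq_of_adj_left hzx hvx.symm) (by simp)
    exact hnvy <| hur.adj_of_alternating_path₆ hN hV hux hzx hvx.symm
      (xsatGraph_adj_f ha) (xsatGraph_adj_t hw hi hwi) (xsatGraph_adj_v hb)
      (by simp [Ne.symm hwa]) hyN
  · have hty := hur.adj_of_alternating_path₄ hN hV hux hzx (xsatGraph_adj_f ha)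
      (xsatGraph_adj_t hb hi (Ne.symm hib)) (by simp) hyN
    exact hia (by simpa using hur.1.eq_of_adj_right hty hy)

theorem false_of_adj_f_of_adj_v (hur : IsURMatching (xsatGraph c) M)
    (hmax : M.edgeSet.ncard = nuUR (xsatGraph c))
    (hmin : ∀ M' : (xsatGraph c).Subgraph, IsURMatching (xsatGraph c) M' →
      M'.edgeSet.ncard = nuUR (xsatGraph c) → crossCount M ≤ crossCount M')
    (ha : a ∈ c j) (hi : i ∈ c j)
    (hy : M.Adj (inl (a, 1)) (inr (j, some a))) (hz : M.Adj (inr (j, none)) (inr (j, some i))) :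
    False := by
  have hia : i ≠ a := by rintro rfl; exact absurd (hur.1.eq_of_adj_right hy hz) (by simp)
  by_cases hu : inl (a, 2) ∈ M.verts
  · obtain ⟨x, hux, -⟩ := hur.1 hu
    rcases eq_of_xsatGraph_adj_u hux.adj_sub with rfl | rfl
    · exact hur.false_of_alternating_cycle₆ hy hz hux.symm (xsatGraph_adj_v ha).symm
        (xsatGraph_adj_t hi ha hia).symm (xsatGraph_adj_u (by decide)) (by simp [Ne.symm hia])
    · exact absurd (hur.1.eq_of_adj_left hy hux.symm) (by simp)
  · exact not_crossCount_minimal_of_replaceEdge hur hmax hmin hy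
      (xsatGraph_adj_u (by decide)).symm hu fun _ hN hNV =>
        adj_f_u_of_verts_eq hur ha hia hy hz hu hN hNV

theorem false_of_adj_t_of_adj_v (hur : IsURMatching (xsatGraph c) M)
    (hmax : M.edgeSet.ncard = nuUR (xsatGraph c))
    (hmin : ∀ M' : (xsatGraph c).Subgraph, IsURMatching (xsatGraph c) M' →
      M'.edgeSet.ncard = nuUR (xsatGraph c) → crossCount M ≤ crossCount M')
    (ha : a ∈ c j) (hb : b ∈ c j) (hba : b ≠ a) (hi : i ∈ c j)
    (hy : M.Adj (inl (a, 0)) (inr (j, some b))) (hz : M.Adj (inr (j, none)) (inr (j, some i))) :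
    False := by
  have hib : i ≠ b := by rintro rfl; exact absurd (hur.1.eq_of_adj_right hy hz) (by simp)
  by_cases hia : i = a
  · subst hia
    by_cases hu : inl (i, 2) ∈ M.verts
    · obtain ⟨x, hux, -⟩ := hur.1 hu
      rcases eq_of_xsatGraph_adj_u hux.adj_sub with rfl | rfl
      · exact absurd (hur.1.eq_of_adj_left hy hux.symm) (by simp)
      · exact hur.false_of_alternating_cycle₆ hy hz hux.symm (xsatGraph_adj_v hb).symm
          (xsatGraph_adj_f hi).symm (xsatGraph_adj_u (by decide)) (by simp [Ne.symm hib])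
    · exact not_crossCount_minimal_of_replaceEdge hur hmax hmin hy
        (xsatGraph_adj_u (by decide)).symm hu fun _ hN hNV =>
          adj_t_u_of_verts_eq hur hi hb hba hy hz hu hN hNV
  · exact hur.false_of_alternating_cycle₄ hy hz (xsatGraph_adj_v hb).symm
      (xsatGraph_adj_t hi ha hia).symm (by simp [Ne.symm hib])

end XSat

theorem no_star_edge_in_Cj_of_cross_edge_general {n m : ℕ} (c : Fin m → Finset (Fin n))
    (M : (xsatGraph c).Subgraph) (hur : IsURMatching (xsatGraph c) M)
    (hmax : M.edgeSet.ncard = nuUR (xsatGraph c))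
    (hmin : ∀ M' : (xsatGraph c).Subgraph, IsURMatching (xsatGraph c) M' →
      M'.edgeSet.ncard = nuUR (xsatGraph c) → crossCount M ≤ crossCount M')
    (j : Fin m)
    (hj : ∃ (o : Option (Fin n)) (w : Fin n × Fin 3), M.Adj (Sum.inr (j, o)) (Sum.inl w)) :
    ∀ o o' : Option (Fin n), ¬ M.Adj (Sum.inr (j, o)) (Sum.inr (j, o')) := by
  intro o o' hoo'
  obtain ⟨i, hi, hz⟩ : ∃ i ∈ c j, M.Adj (Sum.inr (j, none)) (Sum.inr (j, some i)) := by
    obtain ⟨i, hi, ⟨rfl, rfl⟩ | ⟨rfl, rfl⟩⟩ := xsatGraph_adj_star hoo'.adj_sub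
    exacts [⟨i, hi, hoo'⟩, ⟨i, hi, hoo'.symm⟩]
  obtain ⟨_ | b, ⟨a, k⟩, hy⟩ := hj
  · obtain ⟨w, -, hw⟩ := exists_eq_of_xsatGraph_adj_v hy.adj_sub
    exact Sum.inl_ne_inr hw
  obtain ⟨hb, hx⟩ := xsatGraph_adj_leaf hy.adj_sub
  rcases hx with hx | hx | ⟨a', ha', hab, hx⟩
  · exact Sum.inl_ne_inr hx
  · obtain ⟨rfl, rfl⟩ : a = b ∧ k = 1 := by simpa using hx
    exact false_of_adj_f_of_adj_v hur hmax hmin hb hi hy.symm hz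
  · obtain ⟨rfl, rfl⟩ : a = a' ∧ k = 0 := by simpa using hx
    exact false_of_adj_t_of_adj_v hur hmax hmin ha' hb (Ne.symm hab) hi hy.symm hz

/-- Let `M = M₁ ∪ M₂ ∪ M₃` be a maximum uniquely restricted matching in `G(Γ)` with `M₁`
contained in the edge sets of the `X_i`'s, `M₂` contained in the edge sets of the `C_j`'s, and
`M₃` contained in the set of edges between `∪ᵢ X_i` and its complement, chosen minimizing `|M₃|`.
If `j ∈ [m]` is such that `M₃` contains an edge incident with `C_j`, then `M₂` contains no edge
of the star on `C_j`. (Since every edge of `G(Γ)` lies within some `X_i`, within some `C_j`, or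
crosses between the two sides, the decomposition is determined by `M` itself, and `|M₃|` is
`crossCount M`.) -/
theorem no_star_edge_in_Cj_of_cross_edge {n m : ℕ} (c : Fin m → Finset (Fin n))
    (hcard : ∀ j, (c j).card = 3)
    (hocc : ∀ i : Fin n, (Finset.univ.filter fun j => i ∈ c j).card ≤ 3)
    (M : (xsatGraph c).Subgraph) (hur : IsURMatching (xsatGraph c) M)
    (hmax : M.edgeSet.ncard = nuUR (xsatGraph c))
    (hmin : ∀ M' : (xsatGraph c).Subgraph, IsURMatching (xsatGraph c) M' →
      M'.edgeSet.ncard = nuUR (xsatGraph c) → crossCount M ≤ crossCount M')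
    (j : Fin m)
    (hj : ∃ (o : Option (Fin n)) (w : Fin n × Fin 3), M.Adj (Sum.inr (j, o)) (Sum.inl w)) :
    ∀ o o' : Option (Fin n), ¬ M.Adj (Sum.inr (j, o)) (Sum.inr (j, o')) :=
  no_star_edge_in_Cj_of_cross_edge_general c M hur hmax hmin j hj
end

section
/- If t: {x_1,…,x_n} → {0,1} is a truth assignment such that every clause of Γ contains exactly one literal that is true under t, then the matching M that arises from {u_i f_i : i ∈ [n], t(x_i) = 0} ∪ {u_i t_i : i ∈ [n], t(x_i) = 1} by adding, for each j ∈ [m], the edge v_j v where v ∈ C_j is identified with the unique literal of c_j that is true under t, is an induced matching in G(Γ) of size n+m. -/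
open SimpleGraph

/-- The matching arising from `{u_i f_i : t(x_i) = 0} ∪ {u_i t_i : t(x_i) = 1}` by adding, for
each `j ∈ [m]`, the edge `v_j v` where `v = Sum.inr (j, some (g j))` is identified with the
unique literal of `c_j` that is true under `t`. -/
def M15 {n m : ℕ} (c : Fin m → Finset (Fin n)) (t : Fin n → Bool) (g : Fin m → Fin n) :
    (xsatGraph c).Subgraph :=
  pairsSubgraph (xsatGraph c)
    ({pr | ∃ i : Fin n, (t i = false ∧ pr = (Sum.inl (i, 2), Sum.inl (i, 1))) ∨
        (t i = true ∧ pr = (Sum.inl (i, 2), Sum.inl (i, 0)))} ∪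
     {pr | ∃ j : Fin m, pr = (Sum.inr (j, none), Sum.inr (j, some (g j)))})

/-! The edges `u_i t_i` / `u_i f_i` and `v_j w_j` (with `w_j` the true literal of `c_j`) form an
induced matching as soon as no edge of `G(Γ)` joins two of them. The centres `u_i`, `v_j` see only
their own stars, so the only candidates join a covered leaf of `X_i` to `w_j`. If `w_j` is the
literal `x_i`, its neighbour in `X_i` is `f_i`, uncovered since `x_i` is true. Otherwise `t_i` is
a neighbour when `x_i ∈ c_j`; but then `x_i` is false, `c_j` having exactly one true literal, so
`t_i` is uncovered. -/

section PairsSubgraph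

variable {V : Type*} {G : SimpleGraph V} {s : Set (V × V)}

theorem pairsSubgraph_adj_iff {a b : V} :
    (pairsSubgraph G s).Adj a b ↔ G.Adj a b ∧ s(a, b) ∈ {s(q.1, q.2) | q ∈ s} := by
  simp only [pairsSubgraph, Set.mem_ofPred_eq, Sym2.eq_iff]
  constructor
  · rintro ⟨hab, h | h⟩
    · exact ⟨hab, _, h, Or.inl ⟨rfl, rfl⟩⟩
    · exact ⟨hab, _, h, Or.inr ⟨rfl, rfl⟩⟩
  · rintro ⟨hab, q, hq, ⟨rfl, rfl⟩ | ⟨rfl, rfl⟩⟩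
    · exact ⟨hab, Or.inl hq⟩
    · exact ⟨hab, Or.inr hq⟩

theorem pairsSubgraph_edgeSet (hs : ∀ q ∈ s, G.Adj q.1 q.2) :
    (pairsSubgraph G s).edgeSet = {s(q.1, q.2) | q ∈ s} := by
  ext e
  induction e with
  | _ a b =>
    rw [Subgraph.mem_edgeSet, pairsSubgraph_adj_iff, and_iff_right_iff_imp]
    rintro ⟨q, hq, hqab⟩
    exact (Sym2.eq_iff.1 hqab).elim (fun ⟨h1, h2⟩ => h1 ▸ h2 ▸ hs q hq)
      (fun ⟨h1, h2⟩ => h1 ▸ h2 ▸ (hs q hq).symm)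

theorem pairsSubgraph_exists_adj_of_mem_verts {v : V} (hv : v ∈ (pairsSubgraph G s).verts) :
    ∃ w, (pairsSubgraph G s).Adj v w := by
  obtain ⟨a, b, hab, rfl | rfl⟩ := hv
  · exact ⟨b, hab⟩
  · exact ⟨a, (pairsSubgraph G s).adj_symm hab⟩

theorem isInducedMatching_of_isMatching {M : G.Subgraph} (hM : M.IsMatching)
    (hind : ∀ a ∈ M.verts, ∀ b ∈ M.verts, G.Adj a b → M.Adj a b) :
    IsInducedMatching G M := by
  refine ⟨hM, fun ⟨v, hv⟩ => ?_⟩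
  obtain ⟨w, hvw, huniq⟩ := hM hv
  refine ⟨⟨w, hvw.snd_mem⟩, hvw.adj_sub, fun ⟨w', hw'⟩ hvw' => Subtype.ext ?_⟩
  exact huniq w' (hind v hv w' hw' hvw')

/- Two edges sharing a vertex `v` are joined by the edge from `v` to the other endpoint, so `hsep`
also makes the pairs vertex-disjoint. -/
theorem isInducedMatching_pairsSubgraph
    (hsep : ∀ e ∈ {s(q.1, q.2) | q ∈ s}, ∀ e' ∈ {s(q.1, q.2) | q ∈ s},
      ∀ x ∈ e, ∀ y ∈ e', G.Adj x y → e = e') :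
    IsInducedMatching G (pairsSubgraph G s) := by
  have hind : ∀ a ∈ (pairsSubgraph G s).verts, ∀ b ∈ (pairsSubgraph G s).verts,
      G.Adj a b → (pairsSubgraph G s).Adj a b := by
    intro a ha b hb hab
    obtain ⟨a', haa'⟩ := pairsSubgraph_exists_adj_of_mem_verts ha
    obtain ⟨b', hbb'⟩ := pairsSubgraph_exists_adj_of_mem_verts hb
    rw [pairsSubgraph_adj_iff] at haa' hbb' ⊢
    have he := hsep _ haa'.2 _ hbb'.2 a (Sym2.mem_mk_left a a') b (Sym2.mem_mk_left b b') hab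
    have hba : b ∈ s(a, a') := he ▸ Sym2.mem_mk_left b b'
    obtain rfl : b = a' := (Sym2.mem_iff.1 hba).resolve_left hab.ne'
    exact ⟨hab, haa'.2⟩
  refine isInducedMatching_of_isMatching (fun v hv => ?_) hind
  obtain ⟨w, hvw⟩ := pairsSubgraph_exists_adj_of_mem_verts hv
  refine ⟨w, hvw, fun w' hvw' => ?_⟩
  rw [pairsSubgraph_adj_iff] at hvw hvw'
  exact Sym2.congr_right.1 (hsep _ hvw'.2 _ hvw.2 v (Sym2.mem_mk_left v w') w
    (Sym2.mem_mk_right v w) hvw.1)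

end PairsSubgraph

section XSat

variable {n m : ℕ} {c : Fin m → Finset (Fin n)} {t : Fin n → Bool} {g : Fin m → Fin n}

def m15Pair (t : Fin n → Bool) (g : Fin m → Fin n) : Fin n ⊕ Fin m → XSatV n m × XSatV n m
  | Sum.inl i => (Sum.inl (i, 2), Sum.inl (i, if t i then 0 else 1))
  | Sum.inr j => (Sum.inr (j, none), Sum.inr (j, some (g j)))

theorem M15_eq_pairsSubgraph (c : Fin m → Finset (Fin n)) (t : Fin n → Bool)
    (g : Fin m → Fin n) : M15 c t g = pairsSubgraph (xsatGraph c) (Set.range (m15Pair t g)) := by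
  unfold M15
  congr 1
  ext q
  constructor
  · rintro (⟨i, ⟨hti, rfl⟩ | ⟨hti, rfl⟩⟩ | ⟨j, rfl⟩)
    · exact ⟨Sum.inl i, by simp [m15Pair, hti]⟩
    · exact ⟨Sum.inl i, by simp [m15Pair, hti]⟩
    · exact ⟨Sum.inr j, rfl⟩
  · rintro ⟨i | j, rfl⟩
    · cases hti : t i
      · exact Or.inl ⟨i, Or.inl ⟨hti, by simp [m15Pair, hti]⟩⟩
      · exact Or.inl ⟨i, Or.inr ⟨hti, by simp [m15Pair, hti]⟩⟩
    · exact Or.inr ⟨j, rfl⟩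

theorem xsatGraph_adj_m15Pair (hg : ∀ j, g j ∈ c j) (e : Fin n ⊕ Fin m) :
    (xsatGraph c).Adj (m15Pair t g e).1 (m15Pair t g e).2 := by
  rcases e with i | j
  · cases hti : t i <;> simp [m15Pair, xsatGraph, xsatRel, hti]
  · simp [m15Pair, xsatGraph, xsatRel, hg j]

theorem ite_zero_one_ne_two (b : Bool) : (if b then (0 : Fin 3) else 1) ≠ 2 := by
  cases b <;> decide

theorem xsatGraph_not_adj_of_existsUnique_true {i : Fin n} {j : Fin m}
    (hj : ∃! i, i ∈ c j ∧ t i = true) (hgj : g j ∈ c j ∧ t (g j) = true) :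
    ¬ (xsatGraph c).Adj (Sum.inl (i, if t i then 0 else 1)) (Sum.inr (j, some (g j))) := by
  cases hti : t i <;> simp [xsatGraph, xsatRel]
  · rintro rfl -
    simp [hgj.2] at hti
  · rintro - hi
    exact hj.unique hgj ⟨hi, hti⟩

theorem eq_of_xsatGraph_adj_m15Pair (ht : ∀ j, ∃! i, i ∈ c j ∧ t i = true)
    (hg : ∀ j, g j ∈ c j ∧ t (g j) = true) {e e' : Fin n ⊕ Fin m} {x y : XSatV n m}
    (hx : x ∈ s((m15Pair t g e).1, (m15Pair t g e).2))
    (hy : y ∈ s((m15Pair t g e').1, (m15Pair t g e').2)) (hxy : (xsatGraph c).Adj x y) :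
    e = e' := by
  rcases e with i | j <;> rcases e' with i' | j' <;>
    rcases Sym2.mem_iff.1 hx with rfl | rfl <;> rcases Sym2.mem_iff.1 hy with rfl | rfl
  -- an edge between two distinct pairs could only join `t_i` or `f_i` to the chosen leaf of `C_j`
  all_goals first
    | exact absurd hxy (xsatGraph_not_adj_of_existsUnique_true (ht _) (hg _))
    | exact absurd hxy.symm (xsatGraph_not_adj_of_existsUnique_true (ht _) (hg _))
    | simp [m15Pair, xsatGraph, xsatRel, ite_zero_one_ne_two] at hxy ⊢ <;> grind

theorem m15Edge_injective :
    Function.Injective fun e => s((m15Pair t g e).1, (m15Pair t g e).2) := by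
  rintro (i | j) (i' | j') h <;> simp [m15Pair, ite_zero_one_ne_two] at h ⊢ <;> grind

end XSat

theorem m15_isInducedMatching_general {n m : ℕ} (c : Fin m → Finset (Fin n))
    (t : Fin n → Bool) (ht : ∀ j, ∃! i, i ∈ c j ∧ t i = true)
    (g : Fin m → Fin n) (hg : ∀ j, g j ∈ c j ∧ t (g j) = true) :
    IsInducedMatching (xsatGraph c) (M15 c t g) ∧ (M15 c t g).edgeSet.ncard = n + m := by
  rw [M15_eq_pairsSubgraph]
  refine ⟨isInducedMatching_pairsSubgraph ?_, ?_⟩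
  · rintro _ ⟨_, ⟨e, rfl⟩, rfl⟩ _ ⟨_, ⟨e', rfl⟩, rfl⟩ x hx y hy hxy
    rw [eq_of_xsatGraph_adj_m15Pair ht hg hx hy hxy]
  · have hedges : {s(q.1, q.2) | q ∈ Set.range (m15Pair t g)} =
        Set.range fun e => s((m15Pair t g e).1, (m15Pair t g e).2) :=
      (Set.range_comp' _ _).symm
    rw [pairsSubgraph_edgeSet (Set.forall_mem_range.2 (xsatGraph_adj_m15Pair fun j => (hg j).1)),
      hedges, Set.ncard_range_of_injective m15Edge_injective]
    simp

/-- If `t` is a truth assignment such that every clause of `Γ` contains exactly one literal that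
is true under `t`, then the matching arising from `{u_i f_i : t(x_i) = 0} ∪ {u_i t_i : t(x_i) = 1}`
by adding, for each `j ∈ [m]`, the edge `v_j v` where `v ∈ C_j` is identified with the unique
literal of `c_j` that is true under `t`, is an induced matching in `G(Γ)` of size `n + m`. -/
theorem m15_isInducedMatching {n m : ℕ} (c : Fin m → Finset (Fin n))
    (hcard : ∀ j, (c j).card = 3)
    (hocc : ∀ i : Fin n, (Finset.univ.filter fun j => i ∈ c j).card ≤ 3)
    (t : Fin n → Bool) (ht : ∀ j, ∃! i, i ∈ c j ∧ t i = true)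
    (g : Fin m → Fin n) (hg : ∀ j, g j ∈ c j ∧ t (g j) = true) :
    IsInducedMatching (xsatGraph c) (M15 c t g) ∧ (M15 c t g).edgeSet.ncard = n + m :=
  m15_isInducedMatching_general c t ht g hg
end

section
/- If ν_s(G(Γ)) = n+m, then Γ is exact satisfiable; moreover, there is a maximum induced matching M of G(Γ) containing, for each i ∈ [n], either u_i f_i or u_i t_i, and the truth assignment t with t(x_i) = 0 if u_i f_i ∈ M and t(x_i) = 1 if u_i t_i ∈ M makes exactly one literal of every clause of Γ true. -/
open SimpleGraph

/-!
Charge every edge of an induced matching `M` of `G(Γ)` to one of the `n + m` stars `X_i`, `C_j`,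
so that no star is charged twice. If `|M| = n + m`, every star is charged, and this excludes all
edges of `M` joining a variable star to a clause star: each of them leaves some star uncharged.
So `M` consists of one edge `u_i f_i` or `u_i t_i` per variable and one edge `v_j w` per clause.
As `w = x_i` is adjacent to `f_i` and to `t_{i'}` for the other literals `x_{i'}` of `c_j`, the
assignment read off `M` makes exactly the literal `x_i` of `c_j` true.
-/

theorem IsInducedMatching.adj_of_adj {V : Type*} {G : SimpleGraph V} {M : G.Subgraph}
    (hM : IsInducedMatching G M) {a b : V} (ha : a ∈ M.verts) (hb : b ∈ M.verts)
    (hab : G.Adj a b) : M.Adj a b := by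
  obtain ⟨p, hap, -⟩ := hM.1 ha
  obtain ⟨w, -, hw⟩ := hM.2 ⟨a, ha⟩
  have hbw : ⟨b, hb⟩ = w := hw _ (by simpa using hab)
  have hpw : ⟨p, M.edge_vert hap.symm⟩ = w := hw _ (by simpa using M.adj_sub hap)
  obtain rfl : b = p := congrArg Subtype.val (hbw.trans hpw.symm)
  exact hap

theorem IsInducedMatching.eq_and_eq_of_adj {V : Type*} {G : SimpleGraph V} {M : G.Subgraph}
    (hM : IsInducedMatching G M) {a b a' b' : V} (hab : M.Adj a b) (ha'b' : M.Adj a' b')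
    (h : G.Adj a a') : a' = b ∧ b' = a := by
  have haa' := hM.adj_of_adj (M.edge_vert hab) (M.edge_vert ha'b') h
  obtain rfl := hM.1.eq_of_adj_left haa' hab
  exact ⟨rfl, hM.1.eq_of_adj_left ha'b' haa'.symm⟩

theorem exists_isInducedMatching_ncard_eq_nuS {V : Type*} [Finite V] (G : SimpleGraph V) :
    ∃ M : G.Subgraph, IsInducedMatching G M ∧ M.edgeSet.ncard = nuS G := by
  have hbot : IsInducedMatching G ⊥ :=
    ⟨fun _ hv => hv.elim, fun w => w.2.elim⟩
  let S := {k | ∃ M : G.Subgraph, IsInducedMatching G M ∧ M.edgeSet.ncard = k}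
  have hbdd : BddAbove S := by
    refine ⟨Nat.card (Sym2 V), ?_⟩
    rintro k ⟨M, -, rfl⟩
    exact Set.ncard_le_card _
  exact Nat.sSup_mem (s := S) ⟨0, ⊥, hbot, by simp⟩ hbdd

theorem exists_mem_rel_of_ncard_eq_card {α β : Type*} [Finite β] {s : Set α}
    {R : α → β → Prop} (hex : ∀ a ∈ s, ∃ b, R a b)
    (hinj : ∀ a ∈ s, ∀ a' ∈ s, ∀ b, R a b → R a' b → a = a')
    (hcard : s.ncard = Nat.card β) (b : β) : ∃ a ∈ s, R a b := by
  choose g hg using fun a : s => hex a a.2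
  have hg_inj : Function.Injective g := fun a a' h =>
    Subtype.ext (hinj a a.2 a' a'.2 _ (hg a) (h ▸ hg a'))
  obtain ⟨a, rfl⟩ :=
    (hg_inj.bijective_of_nat_card_le (by rw [Nat.card_coe_set_eq, hcard])).2 b
  exact ⟨a, a.2, hg a⟩

namespace XSatV

variable {n m : ℕ}

abbrev t (i : Fin n) : XSatV n m := .inl (i, 0)
abbrev f (i : Fin n) : XSatV n m := .inl (i, 1)
abbrev u (i : Fin n) : XSatV n m := .inl (i, 2)
abbrev v (j : Fin m) : XSatV n m := .inr (j, none)
abbrev leaf (j : Fin m) (i : Fin n) : XSatV n m := .inr (j, some i)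

end XSatV

open XSatV

section
variable {n m : ℕ} {c : Fin m → Finset (Fin n)}

theorem xsatGraph_adj_u_f (i : Fin n) : (xsatGraph c).Adj (u (m := m) i) (f i) := by
  simp [xsatGraph, xsatRel]

theorem xsatGraph_adj_u_t (i : Fin n) : (xsatGraph c).Adj (u (m := m) i) (t i) := by
  simp [xsatGraph, xsatRel]

theorem xsatGraph_adj_v_leaf {j : Fin m} {i : Fin n} (hi : i ∈ c j) :
    (xsatGraph c).Adj (v j) (leaf j i) := by
  simp [xsatGraph, xsatRel, hi]

theorem xsatGraph_adj_f_leaf {j : Fin m} {i : Fin n} (hi : i ∈ c j) :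
    (xsatGraph c).Adj (f i) (leaf j i) := by
  simp [xsatGraph, xsatRel, hi]

theorem xsatGraph_adj_t_leaf {j : Fin m} {i b : Fin n} (hb : b ∈ c j) (hi : i ∈ c j)
    (hbi : b ≠ i) : (xsatGraph c).Adj (t i) (leaf j b) := by
  simp [xsatGraph, xsatRel, hb, hi, hbi]

end

section
variable {n m : ℕ} {c : Fin m → Finset (Fin n)}

/-- `Owns M blk a b`: the edge `ab` of `M` is charged to the star `blk` (`X_i` for `.inl i`,
`C_j` for `.inr j`). An edge `t_i x_b` into `C_j` is charged to `X_b` when `M` also contains the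
mirror edge `t_b x_i`, and to `C_j` otherwise. -/
inductive Owns (M : (xsatGraph c).Subgraph) : Fin n ⊕ Fin m → XSatV n m → XSatV n m → Prop
  | u_f (i : Fin n) (h : M.Adj (u i) (f i)) : Owns M (.inl i) (u i) (f i)
  | u_t (i : Fin n) (h : M.Adj (u i) (t i)) : Owns M (.inl i) (u i) (t i)
  | v_leaf {j : Fin m} {i : Fin n} (hi : i ∈ c j) (h : M.Adj (v j) (leaf j i)) :
      Owns M (.inr j) (v j) (leaf j i)
  | f_leaf {j : Fin m} {i : Fin n} (hi : i ∈ c j) (h : M.Adj (f i) (leaf j i)) :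
      Owns M (.inl i) (f i) (leaf j i)
  | t_leaf_mirror {j : Fin m} {i b : Fin n} (hb : b ∈ c j) (hi : i ∈ c j) (hbi : b ≠ i)
      (h : M.Adj (t i) (leaf j b)) (hmirror : M.Adj (t b) (leaf j i)) :
      Owns M (.inl b) (t i) (leaf j b)
  | t_leaf {j : Fin m} {i b : Fin n} (hb : b ∈ c j) (hi : i ∈ c j) (hbi : b ≠ i)
      (h : M.Adj (t i) (leaf j b)) (hmirror : ¬ M.Adj (t b) (leaf j i)) :
      Owns M (.inr j) (t i) (leaf j b)

variable {M : (xsatGraph c).Subgraph}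

theorem Owns.exists_of_xsatRel {a b : XSatV n m} (hrel : xsatRel c a b) (hab : M.Adj a b) :
    ∃ blk, Owns M blk a b := by
  rcases a with ⟨i, k⟩ | ⟨j, o⟩ <;> rcases b with ⟨i', k'⟩ | ⟨j', o'⟩ <;>
    simp only [xsatRel] at hrel
  · obtain ⟨rfl, rfl, hk'⟩ := hrel
    fin_cases k'
    exacts [⟨_, .u_t i hab⟩, ⟨_, .u_f i hab⟩, absurd rfl hk']
  · rcases hrel with ⟨rfl, rfl, hi⟩ | ⟨rfl, b, rfl, hb, hi, hbi⟩
    · exact ⟨_, .f_leaf hi hab⟩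
    · by_cases hmirror : M.Adj (t b) (leaf j' i)
      · exact ⟨_, .t_leaf_mirror hb hi hbi hab hmirror⟩
      · exact ⟨_, .t_leaf hb hi hbi hab hmirror⟩
  · obtain ⟨rfl, rfl, i, rfl, hi⟩ := hrel
    exact ⟨_, .v_leaf hi hab⟩

theorem Owns.exists_of_adj {a b : XSatV n m} (hab : M.Adj a b) :
    ∃ blk, Owns M blk a b ∨ Owns M blk b a := by
  rcases (M.adj_sub hab).2 with hrel | hrel
  · obtain ⟨blk, h⟩ := Owns.exists_of_xsatRel hrel hab
    exact ⟨blk, .inl h⟩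
  · obtain ⟨blk, h⟩ := Owns.exists_of_xsatRel hrel hab.symm
    exact ⟨blk, .inr h⟩

theorem Owns.sym2_eq_of_inl (hM : IsInducedMatching (xsatGraph c) M) {i : Fin n}
    {a b a' b' : XSatV n m} (h : Owns M (.inl i) a b) (h' : Owns M (.inl i) a' b') :
    s(a, b) = s(a', b') := by
  cases h with
  | u_f _ h =>
    cases h' with
    | u_f => rfl
    | u_t _ h' => simpa using hM.1.eq_of_adj_left h h'
    | f_leaf _ h' => simpa using hM.1.eq_of_adj_left h.symm h'
    | t_leaf_mirror _ _ _ _ hm => simpa using hM.eq_and_eq_of_adj h hm (xsatGraph_adj_u_t i)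
  | u_t _ h =>
    cases h' with
    | u_f _ h' => simpa using hM.1.eq_of_adj_left h h'
    | u_t => rfl
    | f_leaf _ h' => simpa using hM.eq_and_eq_of_adj h h' (xsatGraph_adj_u_f i)
    | t_leaf_mirror _ _ _ _ hm => simpa using hM.1.eq_of_adj_left h.symm hm
  | f_leaf hi h =>
    cases h' with
    | u_f _ h' => simpa using hM.1.eq_of_adj_left h'.symm h
    | u_t _ h' => simpa using hM.eq_and_eq_of_adj h' h (xsatGraph_adj_u_f i)
    | f_leaf _ h' => rw [hM.1.eq_of_adj_left h h']
    | t_leaf_mirror hb _ _ h' _ =>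
      simpa using hM.eq_and_eq_of_adj h h'.symm (xsatGraph_adj_f_leaf hb)
  | t_leaf_mirror hb _ _ h hm =>
    cases h' with
    | u_f _ h' => simpa using hM.eq_and_eq_of_adj h' hm (xsatGraph_adj_u_t i)
    | u_t _ h' => simpa using hM.1.eq_of_adj_left h'.symm hm
    | f_leaf _ h' => simpa using hM.eq_and_eq_of_adj h' h.symm (xsatGraph_adj_f_leaf hb)
    | t_leaf_mirror _ _ _ _ hm' =>
      obtain ⟨rfl, rfl⟩ := by simpa using hM.1.eq_of_adj_left hm hm'
      rfl

theorem Owns.sym2_eq_of_inr (hM : IsInducedMatching (xsatGraph c) M) {j : Fin m}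
    {a b a' b' : XSatV n m} (h : Owns M (.inr j) a b) (h' : Owns M (.inr j) a' b') :
    s(a, b) = s(a', b') := by
  cases h with
  | v_leaf _ h =>
    cases h' with
    | v_leaf _ h' => rw [hM.1.eq_of_adj_left h h']
    | t_leaf hb _ _ h' _ =>
      simpa using hM.eq_and_eq_of_adj h h'.symm (xsatGraph_adj_v_leaf hb)
  | @t_leaf _ i b hb hi _ h hm =>
    cases h' with
    | v_leaf _ h' => simpa using hM.eq_and_eq_of_adj h' h.symm (xsatGraph_adj_v_leaf hb)
    | @t_leaf _ i' b' hb' hi' _ h' _ =>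
      -- Unless the two edges are mirrors of each other, the `t`-end of one of them is
      -- `G`-adjacent to the leaf of the other.
      by_cases hbi' : b = i'
      · subst hbi'
        by_cases hb'i : b' = i
        · exact absurd (hb'i ▸ h') hm
        · obtain ⟨h₁, h₂⟩ :=
            hM.eq_and_eq_of_adj h h'.symm (xsatGraph_adj_t_leaf hb' hi hb'i)
          rw [h₁, h₂]
      · obtain ⟨h₁, h₂⟩ := hM.eq_and_eq_of_adj h' h.symm (xsatGraph_adj_t_leaf hb hi' hbi')
        rw [h₁, h₂]

theorem Owns.sym2_eq (hM : IsInducedMatching (xsatGraph c) M) {blk : Fin n ⊕ Fin m}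
    {a b a' b' : XSatV n m} (h : Owns M blk a b) (h' : Owns M blk a' b') :
    s(a, b) = s(a', b') := by
  cases blk
  exacts [Owns.sym2_eq_of_inl hM h h', Owns.sym2_eq_of_inr hM h h']

theorem Owns.forall_exists_of_ncard_eq (hM : IsInducedMatching (xsatGraph c) M)
    (hcard : M.edgeSet.ncard = n + m) (blk : Fin n ⊕ Fin m) : ∃ a b, Owns M blk a b := by
  have hex : ∀ e ∈ M.edgeSet, ∃ blk, ∃ a b, e = s(a, b) ∧ Owns M blk a b := by
    intro e he
    induction e using Sym2.ind with
    | h a b =>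
      obtain ⟨blk, h | h⟩ := Owns.exists_of_adj he
      exacts [⟨blk, a, b, rfl, h⟩, ⟨blk, b, a, Sym2.eq_swap, h⟩]
  have hinj : ∀ e ∈ M.edgeSet, ∀ e' ∈ M.edgeSet, ∀ blk,
      (∃ a b, e = s(a, b) ∧ Owns M blk a b) → (∃ a b, e' = s(a, b) ∧ Owns M blk a b) →
      e = e' := by
    rintro _ - _ - blk ⟨a, b, rfl, h⟩ ⟨a', b', rfl, h'⟩
    exact Owns.sym2_eq hM h h'
  obtain ⟨-, -, a, b, -, h⟩ := exists_mem_rel_of_ncard_eq_card hex hinj (by simp [hcard]) blk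
  exact ⟨a, b, h⟩

theorem not_adj_f_leaf (hM : IsInducedMatching (xsatGraph c) M)
    (hall : ∀ blk, ∃ a b, Owns M blk a b) {i : Fin n} {j : Fin m} (hi : i ∈ c j) :
    ¬ M.Adj (f i) (leaf j i) := by
  intro hfi
  obtain ⟨_, _, hC⟩ := hall (.inr j)
  cases hC with
  | v_leaf _ h => simpa using hM.eq_and_eq_of_adj h hfi.symm (xsatGraph_adj_v_leaf hi)
  | @t_leaf _ x y hy hx hyx h _ =>
    obtain rfl : x = i := by
      by_contra hxi
      simpa using hM.eq_and_eq_of_adj h hfi.symm (xsatGraph_adj_t_leaf hi hx (Ne.symm hxi))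
    -- `X_y` owns some edge, and each possibility is `G`-adjacent to `t_i x_y` or to `f_i x_i`.
    obtain ⟨_, _, hX⟩ := hall (.inl y)
    cases hX with
    | u_f _ h' => simpa using hM.eq_and_eq_of_adj h'.symm h.symm (xsatGraph_adj_f_leaf hy)
    | u_t _ h' =>
      simpa using hM.eq_and_eq_of_adj h'.symm hfi.symm (xsatGraph_adj_t_leaf hi hy hyx.symm)
    | f_leaf _ h' => simpa using hM.eq_and_eq_of_adj h' h.symm (xsatGraph_adj_f_leaf hy)
    | t_leaf_mirror _ _ _ _ hm =>
      simpa using hM.eq_and_eq_of_adj hm hfi.symm (xsatGraph_adj_t_leaf hi hy hyx.symm)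

theorem not_adj_t_leaf (hM : IsInducedMatching (xsatGraph c) M)
    (hall : ∀ blk, ∃ a b, Owns M blk a b) {i b : Fin n} {j : Fin m} (hb : b ∈ c j)
    (hi : i ∈ c j) (hbi : b ≠ i) : ¬ M.Adj (t i) (leaf j b) := by
  intro hti
  by_cases hmirror : M.Adj (t b) (leaf j i)
  · obtain ⟨_, _, hC⟩ := hall (.inr j)
    cases hC with
    | v_leaf _ h => simpa using hM.eq_and_eq_of_adj h hti.symm (xsatGraph_adj_v_leaf hb)
    | @t_leaf _ x y _ hx _ h hm =>
      by_cases hxb : x = b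
      · subst hxb
        obtain rfl : y = i := by simpa using hM.1.eq_of_adj_left h hmirror
        exact hm hti
      · obtain ⟨h₁, h₂⟩ :=
          hM.eq_and_eq_of_adj h hti.symm (xsatGraph_adj_t_leaf hb hx (Ne.symm hxb))
        obtain rfl : b = y := by simpa using h₁
        obtain rfl : i = x := by simpa using h₂
        exact hm hmirror
  · obtain ⟨_, _, hX⟩ := hall (.inl i)
    cases hX with
    | u_f _ h => simpa using hM.eq_and_eq_of_adj h hti (xsatGraph_adj_u_t i)
    | u_t _ h => simpa using hM.1.eq_of_adj_left h.symm hti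
    | f_leaf hi' h => exact not_adj_f_leaf hM hall hi' h
    | t_leaf_mirror _ _ _ h hm =>
      obtain ⟨rfl, rfl⟩ := by simpa using hM.1.eq_of_adj_left hti hm
      exact hmirror h

theorem adj_u_f_or_adj_u_t (hM : IsInducedMatching (xsatGraph c) M)
    (hall : ∀ blk, ∃ a b, Owns M blk a b) (i : Fin n) :
    M.Adj (u i) (f i) ∨ M.Adj (u i) (t i) := by
  obtain ⟨_, _, hX⟩ := hall (.inl i)
  cases hX with
  | u_f _ h => exact .inl h
  | u_t _ h => exact .inr h
  | f_leaf hi h => exact absurd h (not_adj_f_leaf hM hall hi)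
  | t_leaf_mirror hb hi hbi h _ => exact absurd h (not_adj_t_leaf hM hall hb hi hbi)

theorem exists_adj_v_leaf (hM : IsInducedMatching (xsatGraph c) M)
    (hall : ∀ blk, ∃ a b, Owns M blk a b) (j : Fin m) :
    ∃ i ∈ c j, M.Adj (v j) (leaf j i) := by
  obtain ⟨_, _, hC⟩ := hall (.inr j)
  cases hC with
  | v_leaf hi h => exact ⟨_, hi, h⟩
  | t_leaf hb hi hbi h _ => exact absurd h (not_adj_t_leaf hM hall hb hi hbi)

theorem existsUnique_mem_adj_u_t (hM : IsInducedMatching (xsatGraph c) M)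
    (hall : ∀ blk, ∃ a b, Owns M blk a b) (j : Fin m) :
    ∃! i, i ∈ c j ∧ M.Adj (u i) (t i) := by
  obtain ⟨i, hi, hv⟩ := exists_adj_v_leaf hM hall j
  refine ⟨i, ⟨hi, ?_⟩, ?_⟩
  · refine (adj_u_f_or_adj_u_t hM hall i).resolve_left fun h => ?_
    simpa using hM.eq_and_eq_of_adj h.symm hv.symm (xsatGraph_adj_f_leaf hi)
  · rintro i' ⟨hi', h⟩
    by_contra hne
    simpa using hM.eq_and_eq_of_adj h.symm hv.symm (xsatGraph_adj_t_leaf hi hi' (Ne.symm hne))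

end

theorem exactSatisfiable_of_nuS_eq_general {n m : ℕ} (c : Fin m → Finset (Fin n))
    (hs : nuS (xsatGraph c) = n + m) :
    (∃ t : Fin n → Bool, ∀ j, ∃! i, i ∈ c j ∧ t i = true) ∧
    ∃ M : (xsatGraph c).Subgraph, IsInducedMatching (xsatGraph c) M ∧
      M.edgeSet.ncard = nuS (xsatGraph c) ∧
      (∀ i : Fin n,
        M.Adj (Sum.inl (i, 2)) (Sum.inl (i, 1)) ∨ M.Adj (Sum.inl (i, 2)) (Sum.inl (i, 0))) ∧
      ∃ t : Fin n → Bool,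
        (∀ i : Fin n, (t i = false ↔ M.Adj (Sum.inl (i, 2)) (Sum.inl (i, 1))) ∧
          (t i = true ↔ M.Adj (Sum.inl (i, 2)) (Sum.inl (i, 0)))) ∧
        ∀ j, ∃! i, i ∈ c j ∧ t i = true := by
  classical
  obtain ⟨M, hM, hcard⟩ := exists_isInducedMatching_ncard_eq_nuS (xsatGraph c)
  have hall := Owns.forall_exists_of_ncard_eq hM (hcard.trans hs)
  let τ : Fin n → Bool := fun i => decide (M.Adj (u i) (t i))
  have hτ : ∀ i, τ i = true ↔ M.Adj (u i) (t i) := fun _ => decide_eq_true_iff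
  have hexact : ∀ j, ∃! i, i ∈ c j ∧ τ i = true := by
    simpa only [hτ] using existsUnique_mem_adj_u_t hM hall
  refine ⟨⟨τ, hexact⟩, M, hM, hcard, adj_u_f_or_adj_u_t hM hall, τ,
    fun i => ⟨?_, hτ i⟩, hexact⟩
  rw [← Bool.not_eq_true, hτ]
  exact ⟨(adj_u_f_or_adj_u_t hM hall i).resolve_right,
    fun huf hut => by simpa using hM.1.eq_of_adj_left huf hut⟩

/-- If `ν_s(G(Γ)) = n + m`, then `Γ` is exact satisfiable; moreover, there is a maximum induced
matching `M` of `G(Γ)` containing, for each `i ∈ [n]`, either `u_i f_i` or `u_i t_i`, and the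
truth assignment `t` with `t(x_i) = 0` if `u_i f_i ∈ M` and `t(x_i) = 1` if `u_i t_i ∈ M` makes
exactly one literal of every clause of `Γ` true. -/
theorem exactSatisfiable_of_nuS_eq {n m : ℕ} (c : Fin m → Finset (Fin n))
    (hcard : ∀ j, (c j).card = 3)
    (hocc : ∀ i : Fin n, (Finset.univ.filter fun j => i ∈ c j).card ≤ 3)
    (hs : nuS (xsatGraph c) = n + m) :
    (∃ t : Fin n → Bool, ∀ j, ∃! i, i ∈ c j ∧ t i = true) ∧
    ∃ M : (xsatGraph c).Subgraph, IsInducedMatching (xsatGraph c) M ∧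
      M.edgeSet.ncard = nuS (xsatGraph c) ∧
      (∀ i : Fin n,
        M.Adj (Sum.inl (i, 2)) (Sum.inl (i, 1)) ∨ M.Adj (Sum.inl (i, 2)) (Sum.inl (i, 0))) ∧
      ∃ t : Fin n → Bool,
        (∀ i : Fin n, (t i = false ↔ M.Adj (Sum.inl (i, 2)) (Sum.inl (i, 1))) ∧
          (t i = true ↔ M.Adj (Sum.inl (i, 2)) (Sum.inl (i, 0)))) ∧
        ∀ j, ∃! i, i ∈ c j ∧ t i = true :=
  exactSatisfiable_of_nuS_eq_general c hs
end

section
/- Let G be a graph, M a matching in G, e = uv an edge of M, and f = u'v an edge of G not in M with u' not covered by M. Then M' = (M ∪ {u'v}) \ {uv} is a matching in G, and if M' is not uniquely restricted but M is uniquely restricted, then every M'-alternating cycle of G passes through the edge u'v. -/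
/-!
Every vertex of an `M'`-alternating cycle is matched by `M'` along the cycle. In `M'` the vertices
`u'` and `v` are matched to each other and `u` is unmatched, so an `M'`-alternating cycle avoiding
the edge `u'v` avoids `u`, `v` and `u'` altogether. Away from these three vertices `M` and `M'`
agree, so the cycle is `M`-alternating too, and exchanging its edges with those of `M` yields a
second perfect matching of `G(M)`.
-/

open SimpleGraph

/-- The matching `M' = (M ∪ {u'v}) \ {uv}`. -/
def swapMatching {V : Type*} (G : SimpleGraph V) (M : G.Subgraph) (u v u' : V) : G.Subgraph :=
  pairsSubgraph G {p | (M.Adj p.1 p.2 ∧ s(p.1, p.2) ≠ s(u, v)) ∨ p = (u', v)}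

namespace SimpleGraph

variable {V : Type*}

lemma IsCycles.exists_adj_adj_of_isAlternating {H G' : SimpleGraph V} (hcyc : H.IsCycles)
    (halt : H.IsAlternating G') {v w : V} (hvw : H.Adj v w) : ∃ x, H.Adj v x ∧ G'.Adj v x := by
  obtain ⟨w', hne, hvw'⟩ := hcyc.other_adj_of_adj hvw
  by_cases h : G'.Adj v w
  · exact ⟨w, hvw, h⟩
  · exact ⟨w', hvw', by_contra fun h' => h ((halt hne hvw hvw').mpr h')⟩

lemma IsAlternating.of_adj_iff {H G₁ G₂ : SimpleGraph V} (halt : H.IsAlternating G₁)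
    (h : ∀ ⦃v w⦄, H.Adj v w → (G₁.Adj v w ↔ G₂.Adj v w)) : H.IsAlternating G₂ :=
  fun _ _ _ hne hvw hvw' => by rw [← h hvw, ← h hvw']; exact halt hne hvw hvw'

variable {G : SimpleGraph V}

namespace Subgraph

def symmDiffEdges (M : G.Subgraph) (H : SimpleGraph V) (hHG : H ≤ G) : G.Subgraph where
  verts := M.verts ∪ H.support
  Adj v w := (M.Adj v w ∧ ¬H.Adj v w) ∨ (H.Adj v w ∧ ¬M.Adj v w)
  adj_sub h := h.elim (fun h => h.1.adj_sub) (fun h => hHG h.1)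
  edge_vert {_ w} h := h.elim (fun h => Or.inl (M.edge_vert h.1)) (fun h => Or.inr ⟨w, h.1⟩)
  symm := ⟨fun _ _ h => by simpa only [M.adj_comm, H.adj_comm] using h⟩

variable {M : G.Subgraph} {H : SimpleGraph V} {hHG : H ≤ G}

@[simp]
lemma symmDiffEdges_adj {v w : V} :
    (M.symmDiffEdges H hHG).Adj v w ↔
      (M.Adj v w ∧ ¬H.Adj v w) ∨ (H.Adj v w ∧ ¬M.Adj v w) :=
  Iff.rfl

lemma symmDiffEdges_ne (hH : H ≠ ⊥) : M.symmDiffEdges H hHG ≠ M := by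
  obtain ⟨v, w, hvw⟩ := ne_bot_iff_exists_adj.mp hH
  intro h
  have : (M.symmDiffEdges H hHG).Adj v w ↔ M.Adj v w := by rw [h]
  simp only [symmDiffEdges_adj, hvw] at this
  tauto

lemma IsMatching.symmDiffEdges (hM : M.IsMatching) (hcyc : H.IsCycles)
    (halt : H.IsAlternating M.spanningCoe) : (M.symmDiffEdges H hHG).IsMatching := by
  intro v hv
  have hvM : v ∈ M.verts := by
    rcases (hv : v ∈ M.verts ∪ H.support) with hv | ⟨w, hvw⟩
    · exact hv
    · obtain ⟨x, -, hx⟩ := hcyc.exists_adj_adj_of_isAlternating halt hvw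
      exact M.edge_vert hx
  obtain ⟨w, hvw, hw⟩ := hM hvM
  by_cases hHvw : H.Adj v w
  · obtain ⟨w', hne, hHvw'⟩ := hcyc.other_adj_of_adj hHvw
    have hMvw' : ¬M.Adj v w' := by simpa [hvw] using halt hne hHvw hHvw'
    refine ⟨w', symmDiffEdges_adj.mpr <| Or.inr ⟨hHvw', hMvw'⟩, fun y hy => ?_⟩
    rcases symmDiffEdges_adj.mp hy with ⟨hMvy, hHvy⟩ | ⟨hHvy, hMvy⟩
    · exact absurd (hw y hMvy ▸ hHvw) hHvy
    · exact (hcyc.existsUnique_ne_adj hHvw).unique ⟨fun h => hMvy (h ▸ hvw), hHvy⟩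
        ⟨hne, hHvw'⟩
  · refine ⟨w, symmDiffEdges_adj.mpr <| Or.inl ⟨hvw, hHvw⟩, fun y hy => ?_⟩
    rcases symmDiffEdges_adj.mp hy with ⟨hMvy, -⟩ | ⟨hHvy, hMvy⟩
    · exact hw y hMvy
    · obtain ⟨y', hne, hHvy'⟩ := hcyc.other_adj_of_adj hHvy
      have hMvy' : M.Adj v y' := by simpa [hMvy] using halt hne hHvy hHvy'
      exact absurd (hw y' hMvy' ▸ hHvy') hHvw

lemma symmDiffEdges_verts (hHM : H.support ⊆ M.verts) :
    (M.symmDiffEdges H hHG).verts = M.verts :=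
  Set.union_eq_left.mpr hHM

end Subgraph

variable {M N : G.Subgraph} {x : V} {cyc : G.Walk x x}

lemma IsAltCycle.exists_adj_mem_edges (hcyc : IsAltCycle G M cyc) {v : V}
    (hv : v ∈ cyc.support) : ∃ w, M.Adj v w ∧ s(v, w) ∈ cyc.edges := by
  have hdeg : (cyc.toSubgraph.neighborSet v).ncard ≠ 0 := by
    simp [hcyc.1.ncard_neighborSet_toSubgraph_eq_two hv]
  obtain ⟨w, hvw⟩ := Set.nonempty_of_ncard_ne_zero hdeg
  obtain ⟨y, hvy, hMvy⟩ :=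
    hcyc.1.isCycles_spanningCoe_toSubgraph.exists_adj_adj_of_isAlternating hcyc.2
      (show cyc.toSubgraph.spanningCoe.Adj v w from hvw)
  exact ⟨y, hMvy, Walk.adj_toSubgraph_iff_mem_edges.mp hvy⟩

lemma IsAltCycle.of_adj_iff (hcyc : IsAltCycle G M cyc)
    (h : ∀ v ∈ cyc.support, ∀ w, M.Adj v w ↔ N.Adj v w) : IsAltCycle G N cyc :=
  ⟨hcyc.1, hcyc.2.of_adj_iff fun v w hvw =>
    h v (Walk.mem_support_of_adj_toSubgraph hvw) w⟩

lemma IsURMatching.not_isAltCycle (hM : IsURMatching G M) : ¬IsAltCycle G M cyc := by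
  intro hcyc
  set H := cyc.toSubgraph.spanningCoe
  have hHG : H ≤ G := Subgraph.spanningCoe_le _
  have hH : H ≠ ⊥ := ne_bot_iff_exists_adj.mpr ⟨x, _, cyc.toSubgraph_adj_snd hcyc.1.not_nil⟩
  have hHM : H.support ⊆ M.verts := by
    rintro v ⟨w, hvw⟩
    obtain ⟨y, hvy, -⟩ := hcyc.exists_adj_mem_edges (Walk.mem_support_of_adj_toSubgraph hvw)
    exact M.edge_vert hvy
  exact Subgraph.symmDiffEdges_ne (hHG := hHG) hH <| hM.2 (M.symmDiffEdges H hHG)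
    (hM.1.symmDiffEdges hcyc.1.isCycles_spanningCoe_toSubgraph hcyc.2)
    (Subgraph.symmDiffEdges_verts hHM)

end SimpleGraph

section swapMatching

variable {V : Type*} {G : SimpleGraph V}

lemma mem_verts_pairsSubgraph {s : Set (V × V)} {x : V} :
    x ∈ (pairsSubgraph G s).verts ↔ ∃ y, (pairsSubgraph G s).Adj x y := by
  constructor
  · rintro ⟨a, b, hab, rfl | rfl⟩
    exacts [⟨b, hab⟩, ⟨a, Subgraph.Adj.symm (G' := pairsSubgraph G s) hab⟩]
  · rintro ⟨y, hxy⟩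
    exact ⟨x, y, hxy, Or.inl rfl⟩

variable {M : G.Subgraph} {u v u' : V}

lemma swapMatching_adj (hf : G.Adj u' v) {a b : V} :
    (swapMatching G M u v u').Adj a b ↔
      (M.Adj a b ∧ s(a, b) ≠ s(u, v)) ∨ s(a, b) = s(u', v) := by
  simp only [swapMatching, pairsSubgraph]
  grind [Subgraph.adj_comm, Sym2.eq_swap, Sym2.eq_iff, Subgraph.Adj.adj_sub, SimpleGraph.Adj.symm]

lemma swapMatching_adj_of_ne (hf : G.Adj u' v) {x y : V} (hxu : x ≠ u) (hxv : x ≠ v)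
    (hxu' : x ≠ u') :
    (swapMatching G M u v u').Adj x y ↔ M.Adj x y := by
  rw [swapMatching_adj hf]
  grind [Sym2.eq_iff]

lemma swapMatching_adj_new_left (hf : G.Adj u' v) (hu' : u' ∉ M.verts) {y : V} :
    (swapMatching G M u v u').Adj u' y ↔ y = v := by
  rw [swapMatching_adj hf]
  grind [Sym2.eq_iff, Subgraph.edge_vert, SimpleGraph.Adj.ne]

lemma swapMatching_adj_new_right (hM : M.IsMatching) (huv : M.Adj u v) (hf : G.Adj u' v)
    {y : V} : (swapMatching G M u v u').Adj v y ↔ y = u' := by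
  rw [swapMatching_adj hf]
  have := fun h : M.Adj v y => hM.eq_of_adj_left huv.symm h
  grind [Sym2.eq_iff, SimpleGraph.Adj.ne]

lemma swapMatching_not_adj_old (hM : M.IsMatching) (huv : M.Adj u v) (hf : G.Adj u' v)
    (hu' : u' ∉ M.verts) {y : V} : ¬(swapMatching G M u v u').Adj u y := by
  rw [swapMatching_adj hf]
  have := fun h : M.Adj u y => hM.eq_of_adj_left huv h
  have := M.edge_vert huv
  grind [Sym2.eq_iff, Subgraph.Adj.ne]

lemma swapMatching_isMatching (hM : M.IsMatching) (huv : M.Adj u v) (hf : G.Adj u' v)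
    (hu' : u' ∉ M.verts) : (swapMatching G M u v u').IsMatching := by
  have hunique {x y y' : V} (hy : (swapMatching G M u v u').Adj x y)
      (hy' : (swapMatching G M u v u').Adj x y') : y = y' := by
    by_cases hxu' : x = u'
    · subst hxu'
      rw [swapMatching_adj_new_left hf hu'] at hy hy'
      rw [hy, hy']
    by_cases hxv : x = v
    · subst hxv
      rw [swapMatching_adj_new_right hM huv hf] at hy hy'
      rw [hy, hy']
    by_cases hxu : x = u
    · exact absurd (hxu ▸ hy) (swapMatching_not_adj_old hM huv hf hu')
    rw [swapMatching_adj_of_ne hf hxu hxv hxu'] at hy hy'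
    exact hM.eq_of_adj_left hy hy'
  intro x hx
  obtain ⟨y, hy⟩ := mem_verts_pairsSubgraph.mp hx
  exact ⟨y, hy, fun y' hy' => hunique hy' hy⟩

end swapMatching

theorem swapMatching_isMatching_and_altCycle_through_new_edge_general {V : Type*} (G : SimpleGraph V)
    (M : G.Subgraph) (hM : M.IsMatching) (u v u' : V) (huv : M.Adj u v) (hf : G.Adj u' v)
    (hu' : u' ∉ M.verts) :
    (swapMatching G M u v u').IsMatching ∧
      (IsURMatching G M → ¬ IsURMatching G (swapMatching G M u v u') →
        ∀ (w : V) (cyc : G.Walk w w), IsAltCycle G (swapMatching G M u v u') cyc →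
          s(u', v) ∈ cyc.edges) := by
  refine ⟨swapMatching_isMatching hM huv hf hu', fun hUR _ w cyc hcyc => ?_⟩
  by_contra hnew
  have hu'_notMem : u' ∉ cyc.support := fun hmem => by
    obtain ⟨y, hy, hedge⟩ := hcyc.exists_adj_mem_edges hmem
    rw [swapMatching_adj_new_left hf hu'] at hy
    exact hnew (hy ▸ hedge)
  have hv_notMem : v ∉ cyc.support := fun hmem => by
    obtain ⟨y, hy, hedge⟩ := hcyc.exists_adj_mem_edges hmem
    rw [swapMatching_adj_new_right hM huv hf] at hy
    exact hnew (Sym2.eq_swap ▸ hy ▸ hedge)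
  have hu_notMem : u ∉ cyc.support := fun hmem => by
    obtain ⟨y, hy, -⟩ := hcyc.exists_adj_mem_edges hmem
    exact swapMatching_not_adj_old hM huv hf hu' hy
  refine hUR.not_isAltCycle (hcyc.of_adj_iff fun x hx y => swapMatching_adj_of_ne hf ?_ ?_ ?_)
  exacts [ne_of_mem_of_not_mem hx hu_notMem, ne_of_mem_of_not_mem hx hv_notMem,
    ne_of_mem_of_not_mem hx hu'_notMem]

/-- Let `G` be a graph, `M` a matching in `G`, `e = uv` an edge of `M`, and `f = u'v` an edge of
`G` not in `M` with `u'` not covered by `M`. Then `M' = (M ∪ {u'v}) \ {uv}` is a matching in `G`,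
and if `M'` is not uniquely restricted but `M` is uniquely restricted, then every `M'`-alternating
cycle of `G` passes through the edge `u'v`. -/
theorem swapMatching_isMatching_and_altCycle_through_new_edge {V : Type*} (G : SimpleGraph V)
    (M : G.Subgraph) (hM : M.IsMatching) (u v u' : V) (huv : M.Adj u v) (hf : G.Adj u' v)
    (hfM : ¬ M.Adj u' v) (hu' : u' ∉ M.verts) :
    (swapMatching G M u v u').IsMatching ∧
      (IsURMatching G M → ¬ IsURMatching G (swapMatching G M u v u') →
        ∀ (w : V) (cyc : G.Walk w w), IsAltCycle G (swapMatching G M u v u') cyc →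
          s(u', v) ∈ cyc.edges) :=
  swapMatching_isMatching_and_altCycle_through_new_edge_general G M hM u v u' huv hf hu'
end
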